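/- Let n ≥ 1, let f : ℝ → ℝⁿ → ℝⁿ be continuous with ‖f t x‖ ≤ C for all t ∈ [0,1] and all x ∈ ℝⁿ, let 0 < T ≤ 1, and let c : [0,T) → ℝⁿ satisfy c′(t) = f t (c(t)) for all t ∈ [0,T). Then c extends to a curve c̄ : [0,T] → ℝⁿ that is differentiable on [0,T] and satisfies c̄′(t) = f t (c̄(t)) for all t ∈ [0,T], with derivative at T taken within [0,T]. (This is the extension-theorem step used in the proof of the main theorem: a bounded solution of an ODE with uniformly bounded right-hand side extends to the closed interval, including satisfying the ODE at the endpoint.) -/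

import Mathlib

/-!
Since `‖c'‖ ≤ C` on `[0,T)`, the mean value inequality makes `c` Lipschitz there, so `c(t)` is
Cauchy as `t → T⁻` and, by completeness, converges to some `L`. Setting `c̄(T) = L`, the derivative
`f t (c t)` of `c̄` tends to `f T L` as `t → T⁻` by continuity of `f`, and a function that is
continuous at `T` from the left and whose derivative has a left limit there is left
differentiable at `T` with that limit as derivative.
-/

open Set Filter Topology Function

section

variable {E : Type*} [NormedAddCommGroup E] [NormedSpace ℝ E]

theorem exists_tendsto_nhdsLT_of_norm_hasDerivWithinAt_le [CompleteSpace E]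
    {c c' : ℝ → E} {a b C : ℝ} (hab : a < b)
    (hc : ∀ t ∈ Ico a b, HasDerivWithinAt c (c' t) (Ico a b) t)
    (hC : ∀ t ∈ Ico a b, ‖c' t‖ ≤ C) :
    ∃ L, Tendsto c (𝓝[<] b) (𝓝 L) := by
  have hlip : LipschitzOnWith C.toNNReal c (Ico a b) :=
    (convex_Ico a b).lipschitzOnWith_of_nnnorm_hasDerivWithin_le hc fun t ht => by
      simpa only [norm_toNNReal] using Real.toNNReal_le_toNNReal (hC t ht)
  have hcauchy : Cauchy (map c (𝓝[<] b)) :=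
    (cauchy_nhds.mono nhdsWithin_le_nhds).map_of_le hlip.uniformContinuousOn
      (le_principal_iff.2 (Ico_mem_nhdsLT hab))
  exact cauchy_map_iff_exists_tendsto.1 hcauchy

theorem hasDerivWithinAt_Iic_update_of_tendsto {c c' : ℝ → E} {b : ℝ} {L e : E}
    (hc : ∀ᶠ t in 𝓝[<] b, HasDerivAt c (c' t) t)
    (hL : Tendsto c (𝓝[<] b) (𝓝 L)) (he : Tendsto c' (𝓝[<] b) (𝓝 e)) :
    HasDerivWithinAt (update c b L) e (Iic b) b := by
  set s := {t | t < b ∧ HasDerivAt c (c' t) t}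
  have hs : s ∈ 𝓝[<] b := eventually_mem_nhdsWithin.and hc
  have hderiv : ∀ t ∈ s, HasDerivAt (update c b L) (c' t) t := fun t ht =>
    ht.2.congr_of_eventuallyEq <| by
      filter_upwards [eventually_ne_nhds ht.1.ne] with u hu using update_of_ne hu ..
  refine hasDerivWithinAt_Iic_of_tendsto_deriv (s := s)
    (fun t ht => (hderiv t ht).differentiableAt.differentiableWithinAt) ?_ hs ?_
  · rw [continuousWithinAt_update_same]
    exact hL.mono_left (nhdsWithin_mono _ fun t ht => ht.1.1)
  · exact he.congr' <| eventually_of_mem hs fun t ht => (hderiv t ht).deriv.symm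

end

theorem ode_solution_extends_to_closed_general
    (n : ℕ)
    (f : ℝ → EuclideanSpace ℝ (Fin n) → EuclideanSpace ℝ (Fin n))
    (hf_cont : Continuous fun p : ℝ × EuclideanSpace ℝ (Fin n) => f p.1 p.2)
    (C : ℝ)
    (hf_bdd : ∀ t ∈ Set.Icc (0 : ℝ) 1, ∀ x, ‖f t x‖ ≤ C)
    (T : ℝ) (hT0 : 0 < T) (hT1 : T ≤ 1)
    (c : ℝ → EuclideanSpace ℝ (Fin n))
    (hc : ∀ t ∈ Set.Ico (0 : ℝ) T, HasDerivWithinAt c (f t (c t)) (Set.Ico (0 : ℝ) T) t) :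
    ∃ cbar : ℝ → EuclideanSpace ℝ (Fin n),
      Set.EqOn cbar c (Set.Ico (0 : ℝ) T) ∧
      ∀ t ∈ Set.Icc (0 : ℝ) T,
        HasDerivWithinAt cbar (f t (cbar t)) (Set.Icc (0 : ℝ) T) t := by
  obtain ⟨L, hL⟩ := exists_tendsto_nhdsLT_of_norm_hasDerivWithinAt_le hT0 hc
    fun t ht => hf_bdd t ⟨ht.1, ht.2.le.trans hT1⟩ _
  have hc_Ioo : ∀ t ∈ Ioo 0 T, HasDerivAt c (f t (c t)) t := fun t ht =>
    (hc t (Ioo_subset_Ico_self ht)).hasDerivAt (Ico_mem_nhds ht.1 ht.2)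
  have hf_lim : Tendsto (fun t => f t (c t)) (𝓝[<] T) (𝓝 (f T L)) :=
    (hf_cont.tendsto (T, L)).comp ((tendsto_id.mono_left nhdsWithin_le_nhds).prodMk_nhds hL)
  refine ⟨update c T L, fun t ht => update_of_ne ht.2.ne .., fun t ht => ?_⟩
  rcases ht.2.lt_or_eq with htT | rfl
  · have hc_Icc : HasDerivWithinAt c (f t (c t)) (Icc 0 T) t :=
      (hasDerivWithinAt_inter (Iio_mem_nhds htT)).1 <|
        (hc t ⟨ht.1, htT⟩).mono fun u hu => ⟨hu.1.1, hu.2⟩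
    rw [update_of_ne htT.ne]
    refine hc_Icc.congr_of_eventuallyEq ?_ (update_of_ne htT.ne ..)
    filter_upwards [eventually_ne_nhdsWithin htT.ne] with u hu using update_of_ne hu ..
  · rw [update_self]
    exact (hasDerivWithinAt_Iic_update_of_tendsto
      (eventually_of_mem (Ioo_mem_nhdsLT hT0) hc_Ioo) hL hf_lim).mono Icc_subset_Iic_self

/-- Extension-theorem step: a solution on `[0,T)` of an ODE whose right-hand side is
continuous and uniformly bounded on `[0,1] × ℝⁿ` extends to a solution on the closed
interval `[0,T]`, satisfying the ODE there (derivative within `[0,T]`, one-sided at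
the endpoint `T`). -/
theorem ode_solution_extends_to_closed
    (n : ℕ) (hn : 1 ≤ n)
    (f : ℝ → EuclideanSpace ℝ (Fin n) → EuclideanSpace ℝ (Fin n))
    (hf_cont : Continuous fun p : ℝ × EuclideanSpace ℝ (Fin n) => f p.1 p.2)
    (C : ℝ)
    (hf_bdd : ∀ t ∈ Set.Icc (0 : ℝ) 1, ∀ x, ‖f t x‖ ≤ C)
    (T : ℝ) (hT0 : 0 < T) (hT1 : T ≤ 1)
    (c : ℝ → EuclideanSpace ℝ (Fin n))
    (hc : ∀ t ∈ Set.Ico (0 : ℝ) T, HasDerivWithinAt c (f t (c t)) (Set.Ico (0 : ℝ) T) t) :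
    ∃ cbar : ℝ → EuclideanSpace ℝ (Fin n),
      Set.EqOn cbar c (Set.Ico (0 : ℝ) T) ∧
      ∀ t ∈ Set.Icc (0 : ℝ) T,
        HasDerivWithinAt cbar (f t (cbar t)) (Set.Icc (0 : ℝ) T) t :=
  ode_solution_extends_to_closed_general n f hf_cont C hf_bdd T hT0 hT1 c hc
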